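/- arXiv:1301.5137 — 3 statements merged into one kernel-verified Lean document; each statement's English description precedes it below -/
import Mathlib

section
/- The function T(γ) = arcsinh(√((γ²−1)/2)) + arcsin((1/γ)·√((γ²−1)/2)) is strictly increasing on (1, ∞), with T(γ) → 0 as γ → 1⁺. -/
/-! `arsinh` and `arcsin` are increasing, and their arguments `√((γ² - 1)/2)` and
`(1/γ)·√((γ² - 1)/2) = √((1 - γ⁻²)/2)` strictly increase on `[1, ∞)`. At `γ = 1` both
arguments vanish and `T` is continuous, whence `T(γ) → 0`. -/

open Real Set

lemma strictMonoOn_sqrt_half_sq_sub_one :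
    StrictMonoOn (fun γ : ℝ => √((γ ^ 2 - 1) / 2)) (Ici 1) := by
  intro a ha b _ hab
  have ha : (1 : ℝ) ≤ a := ha
  exact sqrt_lt_sqrt (by nlinarith) (by nlinarith)

lemma one_div_mul_sqrt_half_sq_sub_one {γ : ℝ} (hγ : 0 < γ) :
    1 / γ * √((γ ^ 2 - 1) / 2) = √((1 - (γ ^ 2)⁻¹) / 2) := by
  rw [← sqrt_sq (one_div_pos.mpr hγ).le, ← sqrt_mul (sq_nonneg _)]
  congr 1
  field_simp

lemma strictMonoOn_sqrt_half_one_sub_inv_sq :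
    StrictMonoOn (fun γ : ℝ => √((1 - (γ ^ 2)⁻¹) / 2)) (Ici 1) := by
  intro a ha b _ hab
  have ha : (1 : ℝ) ≤ a := ha
  have hinv : (b ^ 2)⁻¹ < (a ^ 2)⁻¹ :=
    inv_strictAnti₀ (by positivity) (pow_lt_pow_left₀ hab (by linarith) two_ne_zero)
  have hinv_le : (a ^ 2)⁻¹ ≤ 1 := inv_le_one_of_one_le₀ (one_le_pow₀ ha)
  exact sqrt_lt_sqrt (by linarith) (by linarith)

lemma sqrt_half_one_sub_inv_sq_mem_Icc (γ : ℝ) :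
    √((1 - (γ ^ 2)⁻¹) / 2) ∈ Icc (-1) 1 := by
  have : 0 ≤ (γ ^ 2)⁻¹ := by positivity
  exact ⟨by linarith [sqrt_nonneg ((1 - (γ ^ 2)⁻¹) / 2)], sqrt_le_one.mpr (by linarith)⟩

lemma strictMonoOn_arcsin_one_div_mul_sqrt_half_sq_sub_one :
    StrictMonoOn (fun γ : ℝ => arcsin (1 / γ * √((γ ^ 2 - 1) / 2))) (Ici 1) := by
  refine (strictMonoOn_arcsin.comp strictMonoOn_sqrt_half_one_sub_inv_sq
    fun γ _ => sqrt_half_one_sub_inv_sq_mem_Icc γ).congr fun γ hγ => ?_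
  have hγ : (0 : ℝ) < γ := zero_lt_one.trans_le hγ
  simp only [Function.comp_apply, one_div_mul_sqrt_half_sq_sub_one hγ]

theorem min_time_strict_mono :
    StrictMonoOn
      (fun γ : ℝ =>
        Real.arsinh (Real.sqrt ((γ^2 - 1) / 2)) +
          Real.arcsin ((1 / γ) * Real.sqrt ((γ^2 - 1) / 2)))
      (Set.Ioi 1) ∧
    Filter.Tendsto
      (fun γ : ℝ =>
        Real.arsinh (Real.sqrt ((γ^2 - 1) / 2)) +
          Real.arcsin ((1 / γ) * Real.sqrt ((γ^2 - 1) / 2)))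
      (nhdsWithin 1 (Set.Ioi 1)) (nhds 0) := by
  refine ⟨?_, ?_⟩
  · have hX := arsinh_strictMono.comp_strictMonoOn strictMonoOn_sqrt_half_sq_sub_one
    exact (hX.add strictMonoOn_arcsin_one_div_mul_sqrt_half_sq_sub_one).mono Ioi_subset_Ici_self
  · have hcont : ContinuousAt (fun γ : ℝ =>
        arsinh √((γ ^ 2 - 1) / 2) + arcsin (1 / γ * √((γ ^ 2 - 1) / 2))) 1 := by
      fun_prop (disch := norm_num)
    simpa using tendsto_nhdsWithin_of_tendsto_nhds hcont.tendsto
end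

section
/- If ψₙ(x,t) = exp(−(i/ℏ)∫₀ᵗ Eₙ(s)ds)·exp(i m ȧ(t) x²/(2ℏ a(t)))·√(2/a(t))·sin(nπx/a(t)) with Eₙ(t) = n²π²ℏ²/(2m a(t)²), and a satisfies ä(t) = −k(t)a(t)/m, then ψₙ satisfies iℏ ∂ψₙ/∂t = [−(ℏ²/2m)∂²/∂x² + ½k(t)x²]ψₙ for 0 < x < a(t). -/
/-!
Write `ψ(t,x) = e^{θ(t)} r(t) e^{c(t) x²} sin(w(t) x)` with `θ = -(i/ℏ)∫E`, `r = √(2/a)`,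
`c = i m ȧ / (2ℏa)` and `w = nπ/a`, and compare `iℏ ∂ₜψ` with `-(ℏ²/2m) ∂ₓ²ψ + ½ k x² ψ` term by
term: the energy `E` balances `w²`, `r'/r = -ȧ/(2a)` balances `2c`, the `x cos` terms from `w'`
and `4wc` agree, the `ȧ² x²` terms from `c'` and `4c²` agree, and the remaining `ä x²` term of
`c'` is exactly the auxiliary potential `½ k x²` because `k = -m ä / a`.
-/

open Complex

theorem hasDerivAt_cexp_mul_sq_mul_sin (c b : ℂ) (x : ℝ) :
    HasDerivAt (fun y : ℝ => exp (c * y ^ 2) * sin (b * y))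
      (exp (c * x ^ 2) * (2 * c * x * sin (b * x) + b * cos (b * x))) x := by
  have hx : HasDerivAt (fun y : ℝ => (y : ℂ)) 1 x := (hasDerivAt_id x).ofReal_comp
  refine (((hx.pow 2).const_mul c).cexp.mul
    ((hasDerivAt_sin _).comp x (hx.const_mul b))).congr_deriv ?_
  simp only [Function.comp_apply, Pi.pow_apply]
  push_cast
  ring

theorem hasDerivAt_deriv_cexp_mul_sq_mul_sin (c b : ℂ) (x : ℝ) :
    HasDerivAt (deriv fun y : ℝ => exp (c * y ^ 2) * sin (b * y))
      (exp (c * x ^ 2) *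
        ((2 * c + 4 * c ^ 2 * x ^ 2 - b ^ 2) * sin (b * x) + 4 * b * c * x * cos (b * x))) x := by
  have hx : HasDerivAt (fun y : ℝ => (y : ℂ)) 1 x := (hasDerivAt_id x).ofReal_comp
  have hsin := (hasDerivAt_sin _).comp x (hx.const_mul b)
  have hcos := (hasDerivAt_cos _).comp x (hx.const_mul b)
  rw [funext fun y => (hasDerivAt_cexp_mul_sq_mul_sin c b y).deriv]
  refine (((hx.pow 2).const_mul c).cexp.mul
    (((hx.const_mul (2 * c)).mul hsin).add (hcos.const_mul b))).congr_deriv ?_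
  simp only [Function.comp_apply, Pi.mul_apply, Pi.add_apply, Pi.pow_apply]
  push_cast
  ring

theorem deriv_deriv_const_mul_cexp_mul_sq_mul_sin (K c b : ℂ) (x : ℝ) :
    deriv (deriv fun y : ℝ => K * exp (c * y ^ 2) * sin (b * y)) x =
      K * exp (c * x ^ 2) *
        ((2 * c + 4 * c ^ 2 * x ^ 2 - b ^ 2) * sin (b * x) + 4 * b * c * x * cos (b * x)) := by
  simp only [mul_assoc K]
  rw [deriv_const_mul_field', deriv_const_mul_field']
  exact congrArg _ (hasDerivAt_deriv_cexp_mul_sq_mul_sin c b x).deriv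

theorem HasDerivAt.sqrt_const_div {f : ℝ → ℝ} {f' c t : ℝ} (hc : 0 < c)
    (hf : HasDerivAt f f' t) (hft : 0 < f t) :
    HasDerivAt (fun s => √(c / f s)) (-f' / (2 * f t) * √(c / f t)) t := by
  refine (((hasDerivAt_const t c).div hf hft.ne').sqrt (div_pos hc hft).ne').congr_deriv ?_
  have hsq := Real.sq_sqrt (div_pos hc hft).le
  have hpos := Real.sqrt_pos.2 (div_pos hc hft)
  simp only [Pi.div_apply]
  field_simp
  rw [hsq]
  field_simp
  ring

theorem hasDerivAt_chirped_sine_mode {θ c w : ℝ → ℂ} {r : ℝ → ℝ} {θ' c' w' : ℂ} {r' t : ℝ}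
    (x : ℝ) (hθ : HasDerivAt θ θ' t) (hr : HasDerivAt r r' t) (hc : HasDerivAt c c' t)
    (hw : HasDerivAt w w' t) :
    HasDerivAt (fun s => exp (θ s) * r s * exp (c s * x ^ 2) * sin (w s * x))
      (exp (θ t) * exp (c t * x ^ 2) *
        ((θ' + c' * x ^ 2) * r t * sin (w t * x) + r' * sin (w t * x)
          + r t * w' * x * cos (w t * x))) t := by
  refine (((hθ.cexp.mul hr.ofReal_comp).mul (hc.mul_const ((x : ℂ) ^ 2)).cexp).mul
    ((hasDerivAt_sin _).comp t (hw.mul_const (x : ℂ)))).congr_deriv ?_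
  simp only [Function.comp_apply, Pi.mul_apply]
  ring

open Complex in
theorem exact_mode_solution_general (m ℏ : ℝ) (hm : 0 < m) (hℏ : 0 < ℏ)
    (n : ℕ)
    (a : ℝ → ℝ) (hpos : ∀ t, 0 < a t) (ha : ContDiff ℝ 2 a)
    (k : ℝ → ℝ) (hk : ∀ t, deriv (deriv a) t = -(k t) * a t / m)
    (E : ℝ → ℝ)
    (hE : ∀ t, E t = (n : ℝ)^2 * Real.pi^2 * ℏ^2 / (2 * m * (a t)^2))
    (ψ : ℝ → ℝ → ℂ)
    (hψ : ∀ t x, ψ t x =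
      Complex.exp (-(Complex.I / ℏ) * (∫ s in (0:ℝ)..t, (E s : ℂ))) *
      Complex.exp (Complex.I * m * (deriv a t) * x^2 / (2 * ℏ * a t)) *
      (Real.sqrt (2 / a t) : ℂ) *
      Complex.sin ((n : ℂ) * Real.pi * x / a t)) :
    ∀ t x : ℝ, 0 < x → x < a t →
      Complex.I * (ℏ : ℂ) * deriv (fun t' => ψ t' x) t =
        -((ℏ : ℂ)^2 / (2 * m)) * deriv (deriv (fun x' : ℝ => ψ t x')) x +
          (1 / 2) * (k t : ℂ) * (x : ℂ)^2 * ψ t x := by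
  intro t x _ _
  set θ : ℝ → ℂ := fun s => -(I / ℏ) * ∫ s' in (0:ℝ)..s, (E s' : ℂ)
  set r : ℝ → ℝ := fun s => √(2 / a s)
  set c : ℝ → ℂ := fun s => I * m * deriv a s / (2 * ℏ * a s)
  set w : ℝ → ℂ := fun s => n * Real.pi / a s
  have hψ' : ∀ s y, ψ s y = exp (θ s) * r s * exp (c s * y ^ 2) * sin (w s * y) := by
    intro s y
    rw [hψ, mul_right_comm (exp _)]
    congr 4 <;> ring
  have hat : (a t : ℂ) ≠ 0 := by exact_mod_cast (hpos t).ne'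
  have hmc : (m : ℂ) ≠ 0 := by exact_mod_cast hm.ne'
  have hℏc : (ℏ : ℂ) ≠ 0 := by exact_mod_cast hℏ.ne'
  have ha' : HasDerivAt a (deriv a t) t := (ha.differentiable two_ne_zero t).hasDerivAt
  have ha'' : HasDerivAt (deriv a) (deriv (deriv a) t) t :=
    (ha.differentiable_deriv_two t).hasDerivAt
  have hEc : Continuous fun s => (E s : ℂ) := by
    have hden : ∀ s, 2 * m * a s ^ 2 ≠ 0 := fun s => by have := hpos s; positivity
    rw [funext hE]
    fun_prop (disch := exact hden)
  have hθ : HasDerivAt θ (-(I / ℏ) * E t) t :=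
    (hEc.integral_hasStrictDerivAt 0 t).hasDerivAt.const_mul _
  have hr : HasDerivAt r (-deriv a t / (2 * a t) * r t) t := ha'.sqrt_const_div two_pos (hpos t)
  have hc : HasDerivAt c _ t := (ha''.ofReal_comp.const_mul (I * m)).div
    (ha'.ofReal_comp.const_mul (2 * ℏ : ℂ)) (by simp [hℏc, hat])
  have hw : HasDerivAt w _ t := (hasDerivAt_const t (n * Real.pi : ℂ)).div ha'.ofReal_comp hat
  have hdt := hasDerivAt_chirped_sine_mode x hθ hr hc hw
  rw [← funext fun s => hψ' s x] at hdt
  rw [hdt.deriv]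
  simp only [hψ']
  rw [deriv_deriv_const_mul_cexp_mul_sq_mul_sin, hE, hk]
  simp only [c, w]
  push_cast
  field_simp
  ring_nf
  simp only [I_sq]
  ring

open Complex in
theorem exact_mode_solution (m ℏ : ℝ) (hm : 0 < m) (hℏ : 0 < ℏ)
    (n : ℕ) (hn : 0 < n)
    (a : ℝ → ℝ) (hpos : ∀ t, 0 < a t) (ha : ContDiff ℝ 2 a)
    (k : ℝ → ℝ) (hk : ∀ t, deriv (deriv a) t = -(k t) * a t / m)
    (E : ℝ → ℝ)
    (hE : ∀ t, E t = (n : ℝ)^2 * Real.pi^2 * ℏ^2 / (2 * m * (a t)^2))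
    (ψ : ℝ → ℝ → ℂ)
    (hψ : ∀ t x, ψ t x =
      Complex.exp (-(Complex.I / ℏ) * (∫ s in (0:ℝ)..t, (E s : ℂ))) *
      Complex.exp (Complex.I * m * (deriv a t) * x^2 / (2 * ℏ * a t)) *
      (Real.sqrt (2 / a t) : ℂ) *
      Complex.sin ((n : ℂ) * Real.pi * x / a t)) :
    ∀ t x : ℝ, 0 < x → x < a t →
      Complex.I * (ℏ : ℂ) * deriv (fun t' => ψ t' x) t =
        -((ℏ : ℂ)^2 / (2 * m)) * deriv (deriv (fun x' : ℝ => ψ t x')) x +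
          (1 / 2) * (k t : ℂ) * (x : ℂ)^2 * ψ t x :=
  exact_mode_solution_general m ℏ hm hℏ n a hpos ha k hk E hE ψ hψ
end

section
/- For every γ > 1, the time-optimal expansion time T_opt(γ) = arcsinh(√((γ²−1)/2)) + arcsin((1/γ)·√((γ²−1)/2)) satisfies T_opt(γ) < ln γ + 1 + π/4. -/
open Real

/- The two terms are bounded separately. Since `x ≤ √(1 + x²)`, `arsinh x ≤ log (2 √(1 + x²))`,
which for `x² = (γ² - 1)/2` is below `log (2γ) < log γ + 1`. The argument of `arcsin` has square
`(γ² - 1)/(2γ²) < 1/2 = sin² (π/4)`. -/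

theorem Real.arsinh_le_log_two_mul_sqrt (x : ℝ) : arsinh x ≤ log (2 * √(1 + x ^ 2)) := by
  have hx : x ≤ √(1 + x ^ 2) := le_sqrt_of_sq_le (by linarith)
  exact log_le_log (exp_arsinh x ▸ exp_pos (arsinh x)) (by linarith)

theorem Real.arsinh_lt_log_add_one {x y : ℝ} (hy : 0 < y) (h : 1 + x ^ 2 ≤ y ^ 2) :
    arsinh x < log y + 1 :=
  calc arsinh x ≤ log (2 * √(1 + x ^ 2)) := arsinh_le_log_two_mul_sqrt x
    _ ≤ log (2 * y) := by
      gcongr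
      exact sqrt_le_iff.mpr ⟨hy.le, h⟩
    _ = log 2 + log y := log_mul two_ne_zero hy.ne'
    _ < log y + 1 := by linarith [log_two_lt_d9]

theorem Real.arcsin_lt_pi_div_four_of_sq_lt {y : ℝ} (h : y ^ 2 < 1 / 2) : arcsin y < π / 4 := by
  rw [arcsin_lt_iff_lt_sin' ⟨by linarith [pi_pos], by linarith [pi_pos]⟩, sin_pi_div_four]
  linarith [lt_sqrt_of_sq_lt (show (2 * y) ^ 2 < 2 by linarith)]

theorem min_time_upper_bound (γ : ℝ) (hγ : 1 < γ) :
    Real.arsinh (Real.sqrt ((γ^2 - 1) / 2)) +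
      Real.arcsin ((1 / γ) * Real.sqrt ((γ^2 - 1) / 2)) <
    Real.log γ + 1 + Real.pi / 4 := by
  have hγ0 : 0 < γ := by linarith
  have hs : √((γ ^ 2 - 1) / 2) ^ 2 = (γ ^ 2 - 1) / 2 := sq_sqrt (by nlinarith)
  have h_arsinh : arsinh √((γ ^ 2 - 1) / 2) < log γ + 1 :=
    arsinh_lt_log_add_one hγ0 (by nlinarith)
  have h_arcsin : arcsin ((1 / γ) * √((γ ^ 2 - 1) / 2)) < π / 4 := by
    apply arcsin_lt_pi_div_four_of_sq_lt
    rw [mul_pow, hs, div_pow, one_pow, div_mul_div_comm, one_mul,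
      div_lt_div_iff₀ (by positivity) two_pos]
    linarith
  linarith
end
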